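/- arXiv:2309.01896 — 2 statements merged into one kernel-verified Lean document; each statement's English description precedes it below -/
import Mathlib

section
/- Let θ be a nonzero 2×2 real matrix. A linear map φ on ℝ × ℝ² of block form φ(a,v) = (εa, aη + Pv), with ε ∈ ℝ, η ∈ ℝ², P ∈ GL(2,ℝ), is an automorphism of the Lie algebra g(θ) if and only if ε ≠ 0 and Pθ = εθP. Moreover, if tr θ ≠ 0 and det θ ≠ 0 then necessarily ε = 1, and if tr θ = 0 and det θ ≠ 0 then ε ∈ {−1, 1}. -/
/-- The bracket of the Lie algebra `g(θ) = ℝ ×_θ ℝ²`. -/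
def gBracket (θ : Matrix (Fin 2) (Fin 2) ℝ) (x y : ℝ × (Fin 2 → ℝ)) : ℝ × (Fin 2 → ℝ) :=
  (0, x.1 • θ.mulVec y.2 - y.1 • θ.mulVec x.2)

/-!
Writing `φ(a,v) = (εa, aη + Pv)`, the first component of `φ[x,y]` vanishes identically and the
`η`-contributions to `[φx, φy]` cancel (`εab θη - εba θη`), so `φ` preserves the bracket iff
`Pθw = εθPw` for all `w`; bijectivity only asks `ε ≠ 0`. Conjugating `Pθ = εθP` by `P` gives
`θ ∼ εθ`, and comparing traces and determinants yields `tr θ = ε tr θ` and `det θ = ε² det θ`.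
-/

namespace Matrix

variable {n R : Type*} [Fintype n] [DecidableEq n] [CommRing R]

theorem conj_eq_smul_of_mul_eq_smul_mul {P θ : Matrix n n R} {ε : R} (hP : IsUnit P)
    (h : P * θ = ε • (θ * P)) : P * θ * P⁻¹ = ε • θ := by
  rw [h, smul_mul_assoc, mul_assoc, mul_nonsing_inv _ ((isUnit_iff_isUnit_det P).1 hP), mul_one]

theorem trace_eq_mul_trace_of_mul_eq_smul_mul {P θ : Matrix n n R} {ε : R} (hP : IsUnit P)
    (h : P * θ = ε • (θ * P)) : θ.trace = ε * θ.trace := by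
  simpa only [trace_conj hP, trace_smul, smul_eq_mul] using
    congrArg trace (conj_eq_smul_of_mul_eq_smul_mul hP h)

theorem det_eq_pow_mul_det_of_mul_eq_smul_mul {P θ : Matrix n n R} {ε : R} (hP : IsUnit P)
    (h : P * θ = ε • (θ * P)) : θ.det = ε ^ Fintype.card n * θ.det := by
  simpa only [det_conj hP, det_smul] using congrArg det (conj_eq_smul_of_mul_eq_smul_mul hP h)

variable [IsDomain R]

theorem eq_one_of_mul_eq_smul_mul_of_trace_ne_zero {P θ : Matrix n n R} {ε : R} (hP : IsUnit P)
    (h : P * θ = ε • (θ * P)) (htr : θ.trace ≠ 0) : ε = 1 := by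
  exact (mul_eq_right₀ htr).1 (trace_eq_mul_trace_of_mul_eq_smul_mul hP h).symm

theorem eq_one_or_eq_neg_one_of_mul_eq_smul_mul_of_det_ne_zero {P θ : Matrix (Fin 2) (Fin 2) R}
    {ε : R} (hP : IsUnit P) (h : P * θ = ε • (θ * P)) (hdet : θ.det ≠ 0) : ε = 1 ∨ ε = -1 := by
  have := det_eq_pow_mul_det_of_mul_eq_smul_mul hP h
  rw [Fintype.card_fin] at this
  exact sq_eq_one_iff.1 ((mul_eq_right₀ hdet).1 this.symm)

end Matrix

section BlockMap

variable {n K : Type*} [Fintype n] [DecidableEq n] [Field K]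

def blockMap (ε : K) (η : n → K) (P : Matrix n n K) (x : K × (n → K)) : K × (n → K) :=
  (ε * x.1, x.1 • η + P.mulVec x.2)

theorem blockMap_bijective_iff {ε : K} {η : n → K} {P : Matrix n n K} (hP : IsUnit P) :
    Function.Bijective (blockMap ε η P) ↔ ε ≠ 0 := by
  constructor
  · rintro hbij rfl
    obtain ⟨x, hx⟩ := hbij.2 (1, 0)
    simpa [blockMap] using congrArg Prod.fst hx
  · intro hε
    have hPdet := (Matrix.isUnit_iff_isUnit_det P).1 hP
    refine Function.bijective_iff_has_inverse.2
      ⟨fun y => (ε⁻¹ * y.1, P⁻¹.mulVec (y.2 - (ε⁻¹ * y.1) • η)), fun x => ?_, fun y => ?_⟩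
    · simp [blockMap, hε, Matrix.mulVec_mulVec, Matrix.nonsing_inv_mul _ hPdet]
    · simp [blockMap, hε, Matrix.mulVec_mulVec, Matrix.mul_nonsing_inv _ hPdet]

end BlockMap

theorem blockMap_gBracket_iff (θ : Matrix (Fin 2) (Fin 2) ℝ) (ε : ℝ) (η : Fin 2 → ℝ)
    (P : Matrix (Fin 2) (Fin 2) ℝ) :
    (∀ x y, blockMap ε η P (gBracket θ x y) = gBracket θ (blockMap ε η P x) (blockMap ε η P y)) ↔
      P * θ = ε • (θ * P) := by
  constructor
  · intro h
    refine Matrix.mulVec_injective (funext fun w => ?_)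
    simpa [blockMap, gBracket, ← Matrix.mulVec_mulVec, Matrix.smul_mulVec] using
      congrArg Prod.snd (h (1, 0) (0, w))
  · intro h
    have hw : ∀ w, P.mulVec (θ.mulVec w) = ε • θ.mulVec (P.mulVec w) := fun w => by
      rw [Matrix.mulVec_mulVec, Matrix.mulVec_mulVec, h, Matrix.smul_mulVec]
    rintro ⟨a, v⟩ ⟨b, w⟩
    simp only [blockMap, gBracket, mul_zero, Matrix.mulVec_sub, Matrix.mulVec_smul,
      Matrix.mulVec_add, hw, smul_add, smul_smul]
    exact Prod.ext rfl (by module)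

theorem stmt_1_general (θ : Matrix (Fin 2) (Fin 2) ℝ)
    (ε : ℝ) (η : Fin 2 → ℝ) (P : Matrix (Fin 2) (Fin 2) ℝ) (hP : IsUnit P.det)
    (φ : ℝ × (Fin 2 → ℝ) → ℝ × (Fin 2 → ℝ))
    (hφ : ∀ (a : ℝ) (v : Fin 2 → ℝ), φ (a, v) = (ε * a, a • η + P.mulVec v)) :
    ((Function.Bijective φ ∧
        ∀ x y : ℝ × (Fin 2 → ℝ), φ (gBracket θ x y) = gBracket θ (φ x) (φ y)) ↔
      (ε ≠ 0 ∧ P * θ = ε • (θ * P))) ∧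
    (θ.trace ≠ 0 → θ.det ≠ 0 → P * θ = ε • (θ * P) → ε = 1) ∧
    (θ.trace = 0 → θ.det ≠ 0 → P * θ = ε • (θ * P) → ε = 1 ∨ ε = -1) := by
  have hPunit : IsUnit P := (Matrix.isUnit_iff_isUnit_det P).2 hP
  obtain rfl : φ = blockMap ε η P := funext fun x => hφ x.1 x.2
  refine ⟨and_congr (blockMap_bijective_iff hPunit) (blockMap_gBracket_iff θ ε η P), ?_, ?_⟩
  · exact fun htr _ h => Matrix.eq_one_of_mul_eq_smul_mul_of_trace_ne_zero hPunit h htr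
  · exact fun _ hdet h =>
      Matrix.eq_one_or_eq_neg_one_of_mul_eq_smul_mul_of_det_ne_zero hPunit h hdet

/-- A block-form linear map `φ(a,v) = (εa, aη + Pv)` with `P` invertible is an automorphism
of `g(θ)` iff `ε ≠ 0` and `Pθ = εθP`; moreover `ε = 1` when `tr θ ≠ 0`, `det θ ≠ 0`, and
`ε ∈ {−1,1}` when `tr θ = 0`, `det θ ≠ 0`. -/
theorem stmt_1 (θ : Matrix (Fin 2) (Fin 2) ℝ) (hθ : θ ≠ 0)
    (ε : ℝ) (η : Fin 2 → ℝ) (P : Matrix (Fin 2) (Fin 2) ℝ) (hP : IsUnit P.det)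
    (φ : ℝ × (Fin 2 → ℝ) → ℝ × (Fin 2 → ℝ))
    (hφ : ∀ (a : ℝ) (v : Fin 2 → ℝ), φ (a, v) = (ε * a, a • η + P.mulVec v)) :
    ((Function.Bijective φ ∧
        ∀ x y : ℝ × (Fin 2 → ℝ), φ (gBracket θ x y) = gBracket θ (φ x) (φ y)) ↔
      (ε ≠ 0 ∧ P * θ = ε • (θ * P))) ∧
    (θ.trace ≠ 0 → θ.det ≠ 0 → P * θ = ε • (θ * P) → ε = 1) ∧
    (θ.trace = 0 → θ.det ≠ 0 → P * θ = ε • (θ * P) → ε = 1 ∨ ε = -1) :=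
  stmt_1_general θ ε η P hP φ hφ
end

section
/- Let ξ ∈ ℝ² and A ∈ gl(2,ℝ) with Aθ = θA. For s ∈ ℝ define φ_s(t,v) = (t, e^{sA} v + Λ^θ_t Λ^A_s ξ). Then {φ_s}_{s∈ℝ} is a one-parameter group of automorphisms of G(θ): each φ_s is a group automorphism of G(θ), φ_0 = id, and φ_{s₁+s₂} = φ_{s₁} ∘ φ_{s₂}. -/
open NormedSpace

/-- `Λ^M_t w = ∫₀ᵗ e^{uM} w du`. -/
noncomputable def Lam (M : Matrix (Fin 2) (Fin 2) ℝ) (t : ℝ) (w : Fin 2 → ℝ) : Fin 2 → ℝ :=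
  ∫ u in (0 : ℝ)..t, (exp (u • M)).mulVec w

/-- The product of `G(θ)`. -/
noncomputable def Gmul (θ : Matrix (Fin 2) (Fin 2) ℝ) (x y : ℝ × (Fin 2 → ℝ)) :
    ℝ × (Fin 2 → ℝ) :=
  (x.1 + y.1, x.2 + (exp (x.1 • θ)).mulVec y.2)

/-- The flow `φ_s(t,v) = (t, e^{sA} v + Λ^θ_t Λ^A_s ξ)`. -/
noncomputable def flow (θ A : Matrix (Fin 2) (Fin 2) ℝ) (ξ : Fin 2 → ℝ) (s : ℝ)
    (x : ℝ × (Fin 2 → ℝ)) : ℝ × (Fin 2 → ℝ) :=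
  (x.1, (exp (s • A)).mulVec x.2 + Lam θ x.1 (Lam A s ξ))

/-!
Everything reduces to two properties of `Λ^M_t = ∫₀ᵗ e^{uM} du`: the cocycle identity
`Λ^M_{t₁+t₂} = Λ^M_{t₁} + e^{t₁M} Λ^M_{t₂}` (split the integral at `t₁` and translate), and the
fact that a matrix commuting with `M` commutes with `Λ^M_t`. The cocycle identity for `Λ^θ`
makes `φ_s` multiplicative, the one for `Λ^A` gives `φ_{s₁+s₂} = φ_{s₁} ∘ φ_{s₂}`, and
bijectivity follows since `φ_{-s}` inverts `φ_s`.
-/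

open scoped Matrix

variable {n : Type*} [Fintype n]

section MatrixExp

-- Every matrix norm in Mathlib induces the product topology, so this choice is harmless.
attribute [local instance] Matrix.linftyOpNormedRing Matrix.linftyOpNormedAlgebra

theorem Matrix.continuous_exp_smul_mulVec [DecidableEq n] (M : Matrix n n ℝ) (w : n → ℝ) :
    Continuous fun u : ℝ => exp (u • M) *ᵥ w :=
  (exp_continuous.comp (continuous_id.smul continuous_const)).matrix_mulVec continuous_const

end MatrixExp

theorem Matrix.exp_add_smul [DecidableEq n] (M : Matrix n n ℝ) (a b : ℝ) :
    exp ((a + b) • M) = exp (a • M) * exp (b • M) := by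
  rw [add_smul, Matrix.exp_add_of_commute _ _ (((Commute.refl M).smul_left a).smul_right b)]

theorem Matrix.mulVec_intervalIntegral (N : Matrix n n ℝ) {f : ℝ → n → ℝ} {a b : ℝ}
    (hf : IntervalIntegrable f MeasureTheory.volume a b) :
    N *ᵥ (∫ u in a..b, f u) = ∫ u in a..b, N *ᵥ f u :=
  ((Matrix.mulVecLin N).toContinuousLinearMap.intervalIntegral_comp_comm hf).symm

theorem Matrix.intervalIntegrable_exp_smul_mulVec [DecidableEq n] (M : Matrix n n ℝ) (w : n → ℝ)
    (a b : ℝ) :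
    IntervalIntegrable (fun u : ℝ => exp (u • M) *ᵥ w) MeasureTheory.volume a b :=
  (Matrix.continuous_exp_smul_mulVec M w).intervalIntegrable a b

section Lam

variable (M : Matrix (Fin 2) (Fin 2) ℝ)

theorem Lam_zero_left (w : Fin 2 → ℝ) : Lam M 0 w = 0 := by
  simp [Lam]

theorem Lam_zero_right (t : ℝ) : Lam M t 0 = 0 := by
  simp [Lam]

theorem Lam_add_right (t : ℝ) (w₁ w₂ : Fin 2 → ℝ) :
    Lam M t (w₁ + w₂) = Lam M t w₁ + Lam M t w₂ := by
  simp only [Lam, Matrix.mulVec_add]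
  exact intervalIntegral.integral_add (Matrix.intervalIntegrable_exp_smul_mulVec M w₁ 0 t)
    (Matrix.intervalIntegrable_exp_smul_mulVec M w₂ 0 t)

theorem Lam_add_left (t₁ t₂ : ℝ) (w : Fin 2 → ℝ) :
    Lam M (t₁ + t₂) w = Lam M t₁ w + exp (t₁ • M) *ᵥ Lam M t₂ w := by
  have hshift : (∫ u in t₁..t₁ + t₂, exp (u • M) *ᵥ w)
      = ∫ u in (0 : ℝ)..t₂, exp (t₁ • M) *ᵥ (exp (u • M) *ᵥ w) := by
    have := intervalIntegral.integral_comp_add_left (fun u => exp (u • M) *ᵥ w) t₁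
      (a := 0) (b := t₂)
    rw [add_zero] at this
    simp only [← this, Matrix.exp_add_smul, Matrix.mulVec_mulVec]
  rw [Lam, Lam, Lam, ← intervalIntegral.integral_add_adjacent_intervals
      (Matrix.intervalIntegrable_exp_smul_mulVec M w 0 t₁)
      (Matrix.intervalIntegrable_exp_smul_mulVec M w t₁ (t₁ + t₂)), hshift,
    Matrix.mulVec_intervalIntegral _ (Matrix.intervalIntegrable_exp_smul_mulVec M w 0 t₂)]

theorem mulVec_Lam_of_commute {N : Matrix (Fin 2) (Fin 2) ℝ} (h : Commute N M)
    (t : ℝ) (w : Fin 2 → ℝ) : N *ᵥ Lam M t w = Lam M t (N *ᵥ w) := by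
  rw [Lam, Lam,
    Matrix.mulVec_intervalIntegral _ (Matrix.intervalIntegrable_exp_smul_mulVec M w 0 t)]
  congr 1 with u : 1
  simp only [Matrix.mulVec_mulVec, ((h.smul_right u).exp_right).eq]

end Lam

section Flow

variable {θ A : Matrix (Fin 2) (Fin 2) ℝ} {ξ : Fin 2 → ℝ}

theorem flow_zero : flow θ A ξ 0 = id := by
  funext x
  simp [flow, Lam_zero_left, Lam_zero_right]

theorem flow_add (hA : Commute A θ) (s₁ s₂ : ℝ) :
    flow θ A ξ (s₁ + s₂) = flow θ A ξ s₁ ∘ flow θ A ξ s₂ := by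
  funext x
  refine Prod.ext rfl ?_
  show exp ((s₁ + s₂) • A) *ᵥ x.2 + Lam θ x.1 (Lam A (s₁ + s₂) ξ)
    = exp (s₁ • A) *ᵥ (exp (s₂ • A) *ᵥ x.2 + Lam θ x.1 (Lam A s₂ ξ)) + Lam θ x.1 (Lam A s₁ ξ)
  rw [Matrix.mulVec_add, mulVec_Lam_of_commute θ (hA.smul_left s₁).exp_left, Lam_add_left,
    Lam_add_right, Matrix.exp_add_smul, ← Matrix.mulVec_mulVec]
  abel

theorem flow_Gmul (hA : Commute A θ) (s : ℝ) (x y : ℝ × (Fin 2 → ℝ)) :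
    flow θ A ξ s (Gmul θ x y) = Gmul θ (flow θ A ξ s x) (flow θ A ξ s y) := by
  refine Prod.ext rfl ?_
  show exp (s • A) *ᵥ (x.2 + exp (x.1 • θ) *ᵥ y.2) + Lam θ (x.1 + y.1) (Lam A s ξ)
    = exp (s • A) *ᵥ x.2 + Lam θ x.1 (Lam A s ξ)
      + exp (x.1 • θ) *ᵥ (exp (s • A) *ᵥ y.2 + Lam θ y.1 (Lam A s ξ))
  rw [Lam_add_left, Matrix.mulVec_add, Matrix.mulVec_add, Matrix.mulVec_mulVec,
    Matrix.mulVec_mulVec, ((hA.smul_left s).smul_right x.1).exp.eq]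
  abel

theorem flow_bijective (hA : Commute A θ) (s : ℝ) : Function.Bijective (flow θ A ξ s) := by
  have hinv : ∀ a b : ℝ, a + b = 0 → Function.LeftInverse (flow θ A ξ a) (flow θ A ξ b) :=
    fun a b hab x => by rw [← Function.comp_apply (f := flow θ A ξ a), ← flow_add hA, hab,
      flow_zero, id]
  exact ⟨(hinv (-s) s (neg_add_cancel s)).injective,
    (hinv s (-s) (add_neg_cancel s)).surjective⟩

end Flow

/-- `{φ_s}` is a one-parameter group of automorphisms of `G(θ)`. -/
theorem stmt_8 (θ A : Matrix (Fin 2) (Fin 2) ℝ) (ξ : Fin 2 → ℝ) (hA : A * θ = θ * A) :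
    (∀ s : ℝ, Function.Bijective (flow θ A ξ s)) ∧
    (∀ (s : ℝ) (x y : ℝ × (Fin 2 → ℝ)),
        flow θ A ξ s (Gmul θ x y) = Gmul θ (flow θ A ξ s x) (flow θ A ξ s y)) ∧
    flow θ A ξ 0 = id ∧
    (∀ s₁ s₂ : ℝ, flow θ A ξ (s₁ + s₂) = flow θ A ξ s₁ ∘ flow θ A ξ s₂) :=
  ⟨flow_bijective hA, flow_Gmul hA, flow_zero, flow_add hA⟩
end
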